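/- Let r, n, m ≥ 1 and let P : ℤ^r → ℂ^{m×n} be the symbol of an m×n system of Fourier multipliers on the torus 𝕋^r. Suppose there exist C > 0, k ∈ ℝ and a finite set F ⊆ ℤ^r such that λ_min(P(ξ)) ≥ C(1+‖ξ‖²)^{k/2} for all ξ ∈ ℤ^r \ F. Then for every u : ℤ^r → ℂ^n of polynomial growth such that ξ ↦ P(ξ)u(ξ) ∈ ℂ^m is rapidly decreasing, u is itself rapidly decreasing (i.e. the system is globally hypoelliptic). -/

import Mathlib

/-! Off the finite set `F`, `‖u ξ‖ ≤ λ_min(P ξ)⁻¹ ‖P ξ u ξ‖ ≤ C⁻¹ (1 + ‖ξ‖²)^(-k/2) ‖P ξ u ξ‖`,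
so decay of `P u` of order `M + |k|` yields decay of `u` of order `M`; the finitely many
frequencies in `F` only enlarge the constant. -/

noncomputable section

open scoped BigOperators

/-- Euclidean (ℓ²) norm of a complex vector. -/
def l2norm {n : Type*} [Fintype n] (v : n → ℂ) : ℝ :=
  Real.sqrt (∑ i, ‖v i‖ ^ 2)

/-- Smallest singular value of a complex matrix, characterized as the infimum of
`‖A v‖₂` over unit vectors `v`. -/
def sminVal {m n : Type*} [Fintype m] [Fintype n] (A : Matrix m n ℂ) : ℝ :=
  sInf {x : ℝ | ∃ v : n → ℂ, l2norm v = 1 ∧ x = l2norm (A.mulVec v)}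

/-- The weight `1 + ‖ξ‖²` for a frequency `ξ ∈ ℤ^r`. -/
def wt {r : ℕ} (ξ : Fin r → ℤ) : ℝ :=
  1 + ∑ i, ((ξ i : ℝ)) ^ 2

/-- A vector-valued sequence indexed by `ℤ^r` is rapidly decreasing. -/
def RapidDecayV {r n : ℕ} (u : (Fin r → ℤ) → (Fin n → ℂ)) : Prop :=
  ∀ M : ℝ, 0 < M → ∃ C : ℝ, 0 < C ∧ ∀ ξ, l2norm (u ξ) ≤ C * wt ξ ^ (-(M / 2))

/-- A vector-valued sequence indexed by `ℤ^r` has polynomial growth. -/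
def PolyGrowthV {r n : ℕ} (u : (Fin r → ℤ) → (Fin n → ℂ)) : Prop :=
  ∃ C N : ℝ, 0 < C ∧ 0 < N ∧ ∀ ξ, l2norm (u ξ) ≤ C * wt ξ ^ (N / 2)

theorem l2norm_eq_norm_toLp {n : Type*} [Fintype n] (v : n → ℂ) :
    l2norm v = ‖(WithLp.toLp 2 v : EuclideanSpace ℂ n)‖ := by
  rw [EuclideanSpace.norm_eq]
  rfl

theorem l2norm_smul {n : Type*} [Fintype n] (c : ℂ) (v : n → ℂ) :
    l2norm (c • v) = ‖c‖ * l2norm v := by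
  simp only [l2norm_eq_norm_toLp, WithLp.toLp_smul, norm_smul]

theorem l2norm_pos {n : Type*} [Fintype n] {v : n → ℂ} (hv : v ≠ 0) : 0 < l2norm v := by
  rw [l2norm_eq_norm_toLp, norm_pos_iff]
  exact fun h => hv (congrArg WithLp.ofLp h)

theorem sminVal_mul_l2norm_le {m n : Type*} [Fintype m] [Fintype n] (A : Matrix m n ℂ)
    (v : n → ℂ) : sminVal A * l2norm v ≤ l2norm (A.mulVec v) := by
  rcases eq_or_ne v 0 with rfl | hv
  · simp [l2norm]
  have hpos := l2norm_pos hv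
  have hnorm : ‖((l2norm v : ℂ))⁻¹‖ = (l2norm v)⁻¹ := by
    rw [norm_inv, Complex.norm_real, Real.norm_of_nonneg hpos.le]
  have hbdd : BddBelow {x : ℝ | ∃ w : n → ℂ, l2norm w = 1 ∧ x = l2norm (A.mulVec w)} :=
    ⟨0, by rintro x ⟨w, -, rfl⟩; exact Real.sqrt_nonneg _⟩
  have hle : sminVal A ≤ (l2norm v)⁻¹ * l2norm (A.mulVec v) := by
    refine csInf_le hbdd ⟨(l2norm v : ℂ)⁻¹ • v, ?_, ?_⟩
    · rw [l2norm_smul, hnorm, inv_mul_cancel₀ hpos.ne']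
    · rw [Matrix.mulVec_smul, l2norm_smul, hnorm]
  calc sminVal A * l2norm v ≤ (l2norm v)⁻¹ * l2norm (A.mulVec v) * l2norm v := by gcongr
    _ = l2norm (A.mulVec v) := by field_simp

theorem l2norm_le_inv_mul_of_le_sminVal {m n : Type*} [Fintype m] [Fintype n]
    {A : Matrix m n ℂ} {c : ℝ} (hc : 0 < c) (hA : c ≤ sminVal A) (v : n → ℂ) :
    l2norm v ≤ c⁻¹ * l2norm (A.mulVec v) := by
  rw [le_inv_mul_iff₀ hc]
  exact (mul_le_mul_of_nonneg_right hA (Real.sqrt_nonneg _)).trans (sminVal_mul_l2norm_le A v)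

theorem one_le_wt {r : ℕ} (ξ : Fin r → ℤ) : 1 ≤ wt ξ :=
  le_add_of_nonneg_right (Finset.sum_nonneg fun _ _ => sq_nonneg _)

theorem wt_pos {r : ℕ} (ξ : Fin r → ℤ) : 0 < wt ξ :=
  one_pos.trans_le (one_le_wt ξ)

theorem RapidDecayV.of_forall_notMem {r n : ℕ} {u : (Fin r → ℤ) → (Fin n → ℂ)}
    {F : Set (Fin r → ℤ)} (hF : F.Finite)
    (h : ∀ M : ℝ, 0 < M → ∃ C : ℝ, 0 < C ∧ ∀ ξ ∉ F, l2norm (u ξ) ≤ C * wt ξ ^ (-(M / 2))) :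
    RapidDecayV u := by
  intro M hM
  obtain ⟨C, hC, hbound⟩ := h M hM
  obtain ⟨B, hB⟩ := (hF.image fun ξ => l2norm (u ξ) * wt ξ ^ (M / 2)).bddAbove
  refine ⟨max C B, lt_max_of_lt_left hC, fun ξ => ?_⟩
  by_cases hξ : ξ ∈ F
  · have hξB : l2norm (u ξ) * wt ξ ^ (M / 2) ≤ B := hB ⟨ξ, hξ, rfl⟩
    rw [Real.rpow_neg (wt_pos ξ).le, ← div_eq_mul_inv, le_div_iff₀ (Real.rpow_pos_of_pos (wt_pos ξ) _)]
    exact hξB.trans (le_max_right C B)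
  · exact (hbound ξ hξ).trans
      (mul_le_mul_of_nonneg_right (le_max_left C B) (Real.rpow_nonneg (wt_pos ξ).le _))

theorem system_GH_sufficient_general (r n m : ℕ)
    (P : (Fin r → ℤ) → Matrix (Fin m) (Fin n) ℂ)
    (C k : ℝ) (hC : 0 < C) (F : Set (Fin r → ℤ)) (hF : F.Finite)
    (hbound : ∀ ξ, ξ ∉ F → sminVal (P ξ) ≥ C * wt ξ ^ (k / 2)) :
    ∀ u : (Fin r → ℤ) → (Fin n → ℂ), PolyGrowthV u →
      RapidDecayV (fun ξ => (P ξ).mulVec (u ξ)) → RapidDecayV u := by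
  intro u _ hPu
  refine RapidDecayV.of_forall_notMem hF fun M hM => ?_
  obtain ⟨C₁, hC₁, hdecay⟩ := hPu (M + |k|) (by positivity)
  refine ⟨C⁻¹ * C₁, by positivity, fun ξ hξ => ?_⟩
  have hw := wt_pos ξ
  calc l2norm (u ξ) ≤ (C * wt ξ ^ (k / 2))⁻¹ * l2norm ((P ξ).mulVec (u ξ)) :=
        l2norm_le_inv_mul_of_le_sminVal (by positivity) (hbound ξ hξ) _
    _ ≤ (C * wt ξ ^ (k / 2))⁻¹ * (C₁ * wt ξ ^ (-((M + |k|) / 2))) := by gcongr; exact hdecay ξ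
    _ = C⁻¹ * C₁ * wt ξ ^ (-((M + |k|) / 2) - k / 2) := by
        rw [Real.rpow_sub hw]
        field_simp
    _ ≤ C⁻¹ * C₁ * wt ξ ^ (-(M / 2)) := by
        gcongr
        · exact one_le_wt ξ
        · linarith [neg_abs_le k]

theorem system_GH_sufficient (r n m : ℕ) (hr : 1 ≤ r) (hn : 1 ≤ n) (hm : 1 ≤ m)
    (P : (Fin r → ℤ) → Matrix (Fin m) (Fin n) ℂ)
    (C k : ℝ) (hC : 0 < C) (F : Set (Fin r → ℤ)) (hF : F.Finite)
    (hbound : ∀ ξ, ξ ∉ F → sminVal (P ξ) ≥ C * wt ξ ^ (k / 2)) :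
    ∀ u : (Fin r → ℤ) → (Fin n → ℂ), PolyGrowthV u →
      RapidDecayV (fun ξ => (P ξ).mulVec (u ξ)) → RapidDecayV u :=
  system_GH_sufficient_general r n m P C k hC F hF hbound
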